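/- arXiv:2308.04095 — 2 statements merged into one kernel-verified Lean document; each statement's English description precedes it below -/
import Mathlib

section
/- Suppose A : ℝ^n → ℝ^m is linear, f ∈ Im(A), f ≠ 0, and R : ℝ^n → ℝ satisfies R(u) ≤ M for all u and R(0) = 0 with M ≥ 0. Define G(u) = R(u) + (λ/2)‖Au − f‖₂². If λ > 2M/‖f‖₂², then 0 is not a global minimizer of G. -/
/-! At a preimage `u` of `f` the fidelity term vanishes, so `G u = R u ≤ M`, whereas
`G 0 = (λ/2)‖f‖²`, which exceeds `M` exactly when `λ > 2M/‖f‖²`. -/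

theorem penalized_lt_penalized_zero {E F 𝓕 : Type*} [AddCommGroup E] [SeminormedAddCommGroup F]
    [FunLike 𝓕 E F] [AddMonoidHomClass 𝓕 E F] (A : 𝓕) {f : F} {u : E} (hu : A u = f)
    {R : E → ℝ} {M lam : ℝ}
    (hRu : R u ≤ M) (hR0 : R 0 = 0) (hlam : M < lam / 2 * ‖f‖ ^ 2) :
    R u + lam / 2 * ‖A u - f‖ ^ 2 < R 0 + lam / 2 * ‖A 0 - f‖ ^ 2 := by
  rw [hu, sub_self, norm_zero, map_zero, zero_sub, norm_neg, hR0]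
  linarith

theorem lt_half_mul_of_two_mul_div_lt {M lam c : ℝ} (hc : 0 < c) (h : 2 * M / c < lam) :
    M < lam / 2 * c := by
  rw [div_lt_iff₀ hc] at h
  linarith

theorem stmt_7_general (n m : ℕ)
    (A : EuclideanSpace ℝ (Fin n) →ₗ[ℝ] EuclideanSpace ℝ (Fin m))
    (f : EuclideanSpace ℝ (Fin m)) (hf : f ∈ LinearMap.range A) (hf0 : f ≠ 0)
    (R : EuclideanSpace ℝ (Fin n) → ℝ) (M : ℝ)
    (hR : ∀ u, R u ≤ M) (hR0 : R 0 = 0)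
    (lam : ℝ) (hlam : lam > 2 * M / ‖f‖ ^ 2)
    (G : EuclideanSpace ℝ (Fin n) → ℝ)
    (hG : ∀ u, G u = R u + lam / 2 * ‖A u - f‖ ^ 2) :
    ¬ (∀ u, G 0 ≤ G u) := by
  obtain ⟨u, hu⟩ := hf
  have hM : M < lam / 2 * ‖f‖ ^ 2 :=
    lt_half_mul_of_two_mul_div_lt (pow_pos (norm_pos_iff.mpr hf0) 2) hlam
  have hGu : G u < G 0 := by
    simpa only [hG] using penalized_lt_penalized_zero A hu (hR u) hR0 hM
  exact fun h => (h u).not_gt hGu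

theorem stmt_7 (n m : ℕ)
    (A : EuclideanSpace ℝ (Fin n) →ₗ[ℝ] EuclideanSpace ℝ (Fin m))
    (f : EuclideanSpace ℝ (Fin m)) (hf : f ∈ LinearMap.range A) (hf0 : f ≠ 0)
    (R : EuclideanSpace ℝ (Fin n) → ℝ) (M : ℝ) (hM : 0 ≤ M)
    (hR : ∀ u, R u ≤ M) (hR0 : R 0 = 0)
    (lam : ℝ) (hlam : lam > 2 * M / ‖f‖ ^ 2)
    (G : EuclideanSpace ℝ (Fin n) → ℝ)
    (hG : ∀ u, G u = R u + lam / 2 * ‖A u - f‖ ^ 2) :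
    ¬ (∀ u, G 0 ≤ G u) :=
  stmt_7_general n m A f hf hf0 R M hR hR0 lam hlam G hG
end

section
/- Let u : ℝ → ℝ^n be differentiable and satisfy u'(t) = −λAᵀ(Au − f) − (p − R(u)q)/H(u), where at each time p ∈ ∂J(u), q ∈ ∂H(u), J, H are convex positively one-homogeneous, H(u) > 0, and R = J/H. Then d/dt(‖u‖₂²) = −2λ(‖Au‖₂² − ⟨f, Au⟩). -/
/-!
Pair the flow with `u`. Testing the subgradient inequality of a positively one-homogeneous
function at `0` and at `2u` gives Euler's identity `⟪p, u⟫ = J u`, and likewise `⟪q, u⟫ = H u`;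
hence `⟪p - R(u) q, u⟫ = J u - (J u / H u) H u = 0` and the Rayleigh-quotient part of the
velocity is orthogonal to `u`. Only the fidelity term survives, and
`⟪Aᵀ(Au - f), u⟫ = ‖Au‖² - ⟪f, Au⟫`.
-/

open scoped RealInnerProductSpace

section

variable {E F : Type*} [NormedAddCommGroup E] [InnerProductSpace ℝ E]

theorem inner_subgradient_eq_of_homogeneous {Φ : E → ℝ}
    (hhom : ∀ α : ℝ, 0 ≤ α → ∀ v, Φ (α • v) = α * Φ v) {u p : E}
    (hp : ∀ v, Φ v ≥ Φ u + ⟪p, v - u⟫) : ⟪p, u⟫ = Φ u := by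
  have h0 : Φ 0 = 0 := by simpa using hhom 0 le_rfl 0
  have hle := hp 0
  have hge := hp ((2 : ℝ) • u)
  rw [h0, zero_sub, inner_neg_right] at hle
  rw [hhom 2 zero_le_two, two_smul, add_sub_cancel_right] at hge
  linarith

theorem inner_sub_div_smul_eq_zero {u p q : E} {a b : ℝ} (hpu : ⟪p, u⟫ = a) (hqu : ⟪q, u⟫ = b)
    (hb : b ≠ 0) : ⟪p - (a / b) • q, u⟫ = 0 := by
  rw [inner_sub_left, real_inner_smul_left, hpu, hqu, div_mul_cancel₀ a hb, sub_self]

variable [NormedAddCommGroup F] [InnerProductSpace ℝ F] [FiniteDimensional ℝ E]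
  [FiniteDimensional ℝ F]

theorem inner_adjoint_apply_sub_self (A : E →ₗ[ℝ] F) (u : E) (f : F) :
    ⟪LinearMap.adjoint A (A u - f), u⟫ = ‖A u‖ ^ 2 - ⟪f, A u⟫ := by
  rw [LinearMap.adjoint_inner_left, inner_sub_left, real_inner_self_eq_norm_sq]

end

theorem stmt_10_general (n m : ℕ)
    (J H : EuclideanSpace ℝ (Fin n) → ℝ)
    (hJhom : ∀ (α : ℝ), 0 ≤ α → ∀ v, J (α • v) = α * J v)
    (hHhom : ∀ (α : ℝ), 0 ≤ α → ∀ v, H (α • v) = α * H v)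
    (A : EuclideanSpace ℝ (Fin n) →ₗ[ℝ] EuclideanSpace ℝ (Fin m))
    (f : EuclideanSpace ℝ (Fin m)) (lam : ℝ)
    (R : EuclideanSpace ℝ (Fin n) → ℝ) (hR : ∀ v, R v = J v / H v)
    (u : ℝ → EuclideanSpace ℝ (Fin n))
    (p q : ℝ → EuclideanSpace ℝ (Fin n))
    (hHpos : ∀ t, 0 < H (u t))
    (hp : ∀ t, ∀ v, J v ≥ J (u t) + ⟪p t, v - u t⟫)
    (hq : ∀ t, ∀ v, H v ≥ H (u t) + ⟪q t, v - u t⟫)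
    (hflow : ∀ t, HasDerivAt u
      (-(lam • (LinearMap.adjoint A) (A (u t) - f))
        - (H (u t))⁻¹ • (p t - R (u t) • q t)) t) :
    ∀ t, HasDerivAt (fun s => ‖u s‖ ^ 2)
      (-2 * lam * (‖A (u t)‖ ^ 2 - ⟪f, A (u t)⟫)) t := by
  intro t
  have hpu := inner_subgradient_eq_of_homogeneous hJhom (hp t)
  have hqu := inner_subgradient_eq_of_homogeneous hHhom (hq t)
  have horth : ⟪p t - R (u t) • q t, u t⟫ = 0 := by
    rw [hR]
    exact inner_sub_div_smul_eq_zero hpu hqu (hHpos t).ne'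
  refine (hflow t).norm_sq.congr_deriv ?_
  rw [real_inner_comm, inner_sub_left, inner_neg_left, real_inner_smul_left,
    real_inner_smul_left, horth, inner_adjoint_apply_sub_self]
  ring

theorem stmt_10 (n m : ℕ)
    (J H : EuclideanSpace ℝ (Fin n) → ℝ)
    (hJconv : ConvexOn ℝ Set.univ J) (hHconv : ConvexOn ℝ Set.univ H)
    (hJhom : ∀ (α : ℝ), 0 ≤ α → ∀ v, J (α • v) = α * J v)
    (hHhom : ∀ (α : ℝ), 0 ≤ α → ∀ v, H (α • v) = α * H v)
    (A : EuclideanSpace ℝ (Fin n) →ₗ[ℝ] EuclideanSpace ℝ (Fin m))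
    (f : EuclideanSpace ℝ (Fin m)) (lam : ℝ) (hlam : 0 < lam)
    (R : EuclideanSpace ℝ (Fin n) → ℝ) (hR : ∀ v, R v = J v / H v)
    (u : ℝ → EuclideanSpace ℝ (Fin n))
    (p q : ℝ → EuclideanSpace ℝ (Fin n))
    (hHpos : ∀ t, 0 < H (u t))
    (hp : ∀ t, ∀ v, J v ≥ J (u t) + ⟪p t, v - u t⟫)
    (hq : ∀ t, ∀ v, H v ≥ H (u t) + ⟪q t, v - u t⟫)
    (hflow : ∀ t, HasDerivAt u
      (-(lam • (LinearMap.adjoint A) (A (u t) - f))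
        - (H (u t))⁻¹ • (p t - R (u t) • q t)) t) :
    ∀ t, HasDerivAt (fun s => ‖u s‖ ^ 2)
      (-2 * lam * (‖A (u t)‖ ^ 2 - ⟪f, A (u t)⟫)) t :=
  stmt_10_general n m J H hJhom hHhom A f lam R hR u p q hHpos hp hq hflow
end
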